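/- arXiv:2507.22334 — 6 statements merged into one kernel-verified Lean document; each statement's English description precedes it below -/
import Mathlib

section
/- If A is a symmetric positive definite n×n real matrix, B is an m×n real matrix, and M is a symmetric positive definite m×m matrix such that for all nonzero vectors u ∈ ℝⁿ, uᵀ Bᵀ M⁻¹ B u ≤ d · uᵀ A u for some constant d > 0, then for all nonzero z ∈ ℝᵐ, zᵀ (B A⁻¹ Bᵀ) z ≤ d · zᵀ M z. -/
/-!
With `w = A⁻¹ Bᵀ z` and `s = zᵀ B A⁻¹ Bᵀ z` we have `s = zᵀ (B w) = wᵀ A w`. Cauchy–Schwarz for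
the dual pair of norms `‖·‖_M`, `‖·‖_{M⁻¹}` and the hypothesis applied to `w` give
`s² ≤ (zᵀ M z) · (B w)ᵀ M⁻¹ (B w) ≤ (zᵀ M z) · d s`; dividing by `s` gives the bound when
`s > 0`, and otherwise it is trivial since `d · zᵀ M z ≥ 0`.
-/

open Matrix

namespace Matrix

variable {ι κ : Type*} [Fintype ι] [Fintype κ]

theorem dotProduct_transpose_mul_mul_mulVec {R : Type*} [CommSemiring R]
    (C : Matrix κ ι R) (N : Matrix κ κ R) (u : ι → R) :
    u ⬝ᵥ (Cᵀ * N * C) *ᵥ u = (C *ᵥ u) ⬝ᵥ N *ᵥ (C *ᵥ u) := by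
  rw [← mulVec_mulVec, ← mulVec_mulVec, dotProduct_mulVec, ← mulVec_transpose, transpose_transpose,
    dotProduct_comm]

theorem mulVec_nonsing_inv_mulVec {R : Type*} [CommRing R] [DecidableEq ι] {A : Matrix ι ι R}
    (h : IsUnit A.det) (v : ι → R) : A *ᵥ (A⁻¹ *ᵥ v) = v := by
  rw [mulVec_mulVec, mul_nonsing_inv _ h, one_mulVec]

theorem PosSemidef.dotProduct_mulVec_sq_le {M : Matrix ι ι ℝ} (hM : M.PosSemidef) (x y : ι → ℝ) :
    (x ⬝ᵥ M *ᵥ y) ^ 2 ≤ (x ⬝ᵥ M *ᵥ x) * (y ⬝ᵥ M *ᵥ y) := by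
  classical
  simpa only [toBilin'_apply'] using
    M.toBilin'.apply_sq_le_of_symm
      (fun x => by simpa only [toBilin'_apply', star_trivial] using hM.dotProduct_mulVec_nonneg x)
      (LinearMap.BilinForm.isSymm_iff.mp <|
        isSymm_toBilin'_iff_isSymm.mpr (isHermitian_iff_isSymm.mp hM.isHermitian)) x y

theorem PosDef.dotProduct_sq_le [DecidableEq ι] {M : Matrix ι ι ℝ} (hM : M.PosDef) (x y : ι → ℝ) :
    (x ⬝ᵥ y) ^ 2 ≤ (x ⬝ᵥ M *ᵥ x) * (y ⬝ᵥ M⁻¹ *ᵥ y) := by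
  have hMy := mulVec_nonsing_inv_mulVec ((isUnit_iff_isUnit_det M).mp hM.isUnit) y
  simpa only [hMy, dotProduct_comm (M⁻¹ *ᵥ y)] using
    hM.posSemidef.dotProduct_mulVec_sq_le x (M⁻¹ *ᵥ y)

end Matrix

theorem schur_quadratic_bound {n m : ℕ}
    (A : Matrix (Fin n) (Fin n) ℝ) (B : Matrix (Fin m) (Fin n) ℝ)
    (M : Matrix (Fin m) (Fin m) ℝ) (d : ℝ)
    (hA : A.PosDef) (hM : M.PosDef) (hd : 0 < d)
    (hbound : ∀ u : Fin n → ℝ, u ≠ 0 →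
      u ⬝ᵥ (Bᵀ * M⁻¹ * B).mulVec u ≤ d * (u ⬝ᵥ A.mulVec u)) :
    ∀ z : Fin m → ℝ, z ≠ 0 →
      z ⬝ᵥ (B * A⁻¹ * Bᵀ).mulVec z ≤ d * (z ⬝ᵥ M.mulVec z) := by
  intro z _
  set s := z ⬝ᵥ (B * A⁻¹ * Bᵀ) *ᵥ z
  set w := A⁻¹ *ᵥ (Bᵀ *ᵥ z)
  have hAw : A *ᵥ w = Bᵀ *ᵥ z :=
    mulVec_nonsing_inv_mulVec ((isUnit_iff_isUnit_det A).mp hA.isUnit) _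
  have hs : s = z ⬝ᵥ B *ᵥ w := by
    rw [dotProduct_mulVec, ← mulVec_transpose]
    simpa only [transpose_transpose] using dotProduct_transpose_mul_mul_mulVec Bᵀ A⁻¹ z
  have hwAw : w ⬝ᵥ A *ᵥ w = s := by
    rw [hAw, hs, dotProduct_mulVec z, ← mulVec_transpose, dotProduct_comm]
  have hBw : (B *ᵥ w) ⬝ᵥ M⁻¹ *ᵥ (B *ᵥ w) ≤ d * s := by
    rcases eq_or_ne w 0 with hw | hw
    · rw [← hwAw, hw]
      simp
    · simpa only [dotProduct_transpose_mul_mul_mulVec, hwAw] using hbound w hw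
  have hc : 0 ≤ z ⬝ᵥ M *ᵥ z := by simpa using hM.posSemidef.dotProduct_mulVec_nonneg z
  have hCS : s ^ 2 ≤ (z ⬝ᵥ M *ᵥ z) * (d * s) := by
    rw [hs] at hBw ⊢
    exact (hM.dotProduct_sq_le z _).trans (mul_le_mul_of_nonneg_left hBw hc)
  nlinarith [mul_nonneg hd.le hc]
end

section
/- Consider the generalized eigenvalue problem for the 2×2 block matrix [[A, −Bᵀ],[−B, −εM − ρwwᵀ]] with respect to the block diagonal matrix diag(A, Ŝ), where Ŝ = ρwwᵀ + M. If λ ≠ 1 is an eigenvalue with eigenvector (u, z), then z ≠ 0 and λ satisfies the quadratic equation λ² (zᵀ Ŝ z) − λ(1−ε)(zᵀ M z) − zᵀ S z = 0, where S = εM + ρwwᵀ + B A⁻¹ Bᵀ. -/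
open Matrix

/-!
Eliminating `u` turns the eigenproblem into a scalar identity: the first block row says
`Bᵀ z = (1 - λ) A u`, so `zᵀ B A⁻¹ Bᵀ z = (1 - λ) zᵀ B u`, and the second block row tested
against `z` expresses `zᵀ B u` through the quadratic forms of `z`. Since `A` is invertible and
`λ ≠ 1`, `z = 0` would force `u = 0`.
-/

namespace Matrix

variable {K : Type*} [Field K] {m n : Type*} [Fintype m] [Fintype n] [DecidableEq n]

theorem eq_zero_of_transpose_mulVec_eq_smul_mulVec {A : Matrix n n K} {B : Matrix m n K}
    {u : n → K} {z : m → K} {c : K} (hA : A.det ≠ 0) (hc : c ≠ 0)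
    (hB : Bᵀ *ᵥ z = c • A *ᵥ u) (hz : z = 0) : u = 0 := by
  have hAu : c • A *ᵥ u = 0 := by rw [← hB, hz, mulVec_zero]
  exact eq_zero_of_mulVec_eq_zero hA ((smul_eq_zero.mp hAu).resolve_left hc)

theorem dotProduct_mul_nonsing_inv_mul_transpose_mulVec {A : Matrix n n K} {B : Matrix m n K}
    {u : n → K} {z : m → K} {c : K} (hA : IsUnit A.det) (hB : Bᵀ *ᵥ z = c • A *ᵥ u) :
    z ⬝ᵥ (B * A⁻¹ * Bᵀ) *ᵥ z = c * (z ⬝ᵥ B *ᵥ u) := by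
  rw [← mulVec_mulVec, hB, mulVec_smul, mulVec_mulVec, Matrix.mul_assoc, nonsing_inv_mul A hA,
    Matrix.mul_one, dotProduct_smul, smul_eq_mul]

/-- The block problem `[[A, -Bᵀ], [-B, -C]] (u, z) = λ diag(A, C + D) (u, z)`, with the first
block row already solved for `Bᵀ z`. -/
theorem saddle_point_eigenvalue_quadratic {A : Matrix n n K} {B : Matrix m n K}
    {C D : Matrix m m K} {u : n → K} {z : m → K} {lam : K} (hA : IsUnit A.det)
    (hB : Bᵀ *ᵥ z = (1 - lam) • A *ᵥ u)
    (heq : -(B *ᵥ u) - C *ᵥ z = lam • (C + D) *ᵥ z) :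
    lam ^ 2 * (z ⬝ᵥ (C + D) *ᵥ z) - lam * (z ⬝ᵥ D *ᵥ z)
      - z ⬝ᵥ (C + B * A⁻¹ * Bᵀ) *ᵥ z = 0 := by
  have hSchur := dotProduct_mul_nonsing_inv_mul_transpose_mulVec hA hB
  have htested : -(z ⬝ᵥ B *ᵥ u) - z ⬝ᵥ C *ᵥ z = lam * (z ⬝ᵥ C *ᵥ z + z ⬝ᵥ D *ᵥ z) := by
    simpa only [dotProduct_sub, dotProduct_neg, dotProduct_smul, add_mulVec, dotProduct_add,
      smul_eq_mul] using congrArg (z ⬝ᵥ ·) heq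
  simp only [add_mulVec, dotProduct_add]
  linear_combination -hSchur + (1 - lam) * htested

end Matrix

theorem generalized_eigenvalue_quadratic_general {n N : ℕ}
    (A : Matrix (Fin n) (Fin n) ℝ) (M : Matrix (Fin N) (Fin N) ℝ)
    (B : Matrix (Fin N) (Fin n) ℝ) (w : Fin N → ℝ) (ε ρ lam : ℝ)
    (u : Fin n → ℝ) (z : Fin N → ℝ)
    (hA : A.PosDef)
    (hlam : lam ≠ 1)
    (hvec : ¬(u = 0 ∧ z = 0))
    (heq1 : A.mulVec u - Bᵀ.mulVec z = lam • A.mulVec u)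
    (heq2 : -(B.mulVec u) - (ε • M + ρ • vecMulVec w w).mulVec z
              = lam • (ρ • vecMulVec w w + M).mulVec z) :
    z ≠ 0 ∧
    lam ^ 2 * (z ⬝ᵥ (ρ • vecMulVec w w + M).mulVec z)
      - lam * (1 - ε) * (z ⬝ᵥ M.mulVec z)
      - z ⬝ᵥ (ε • M + ρ • vecMulVec w w + B * A⁻¹ * Bᵀ).mulVec z = 0 := by
  have hdet : A.det ≠ 0 := hA.det_pos.ne'
  have hB : Bᵀ *ᵥ z = (1 - lam) • A *ᵥ u := by
    linear_combination (norm := module) -heq1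
  have hsplit : ρ • vecMulVec w w + M = (ε • M + ρ • vecMulVec w w) + (1 - ε) • M := by
    module
  refine ⟨fun hz => hvec
    ⟨eq_zero_of_transpose_mulVec_eq_smul_mulVec hdet (sub_ne_zero.mpr hlam.symm) hB hz, hz⟩, ?_⟩
  rw [hsplit] at heq2 ⊢
  have := saddle_point_eigenvalue_quadratic (isUnit_iff_ne_zero.mpr hdet) hB heq2
  rwa [smul_mulVec, dotProduct_smul, smul_eq_mul, ← mul_assoc] at this

theorem generalized_eigenvalue_quadratic {n N : ℕ}
    (A : Matrix (Fin n) (Fin n) ℝ) (M : Matrix (Fin N) (Fin N) ℝ)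
    (B : Matrix (Fin N) (Fin n) ℝ) (w : Fin N → ℝ) (ε ρ lam : ℝ)
    (u : Fin n → ℝ) (z : Fin N → ℝ)
    (hA : A.PosDef) (hM : M.PosDef) (hw : w ⬝ᵥ w = 1)
    (hε₀ : 0 < ε) (hε₁ : ε < 1) (hρ : 0 < ρ)
    (hlam : lam ≠ 1)
    (hvec : ¬(u = 0 ∧ z = 0))
    (heq1 : A.mulVec u - Bᵀ.mulVec z = lam • A.mulVec u)
    (heq2 : -(B.mulVec u) - (ε • M + ρ • vecMulVec w w).mulVec z
              = lam • (ρ • vecMulVec w w + M).mulVec z) :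
    z ≠ 0 ∧
    lam ^ 2 * (z ⬝ᵥ (ρ • vecMulVec w w + M).mulVec z)
      - lam * (1 - ε) * (z ⬝ᵥ M.mulVec z)
      - z ⬝ᵥ (ε • M + ρ • vecMulVec w w + B * A⁻¹ * Bᵀ).mulVec z = 0 :=
  generalized_eigenvalue_quadratic_general A M B w ε ρ lam u z hA hlam hvec heq1 heq2
end

section
/- Let D and M be symmetric positive definite N×N matrices with D ≥ c₀ M in the Loewner order for some c₀ > 0, let A be symmetric positive definite, and let B satisfy uᵀ Bᵀ M⁻¹ B u ≤ d · uᵀ A u for all u and some d > 0. Then for ε, μ, α > 0, the Schur complement S̃ = (ε/μ) D + (αε/μ)² B (εA + A₀)⁻¹ Bᵀ, where A₀ = Bᵀ M⁻¹ B, satisfies (ε/μ) D ≤ S̃ ≤ (ε/μ)(1 + α²d/(c₀ μ)) D in the Loewner order. -/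
/-!
Both Schur complements of the block matrix `[[P, Bᴴ], [B, Q]]` with `P, Q` positive definite are
positive semidefinite exactly when the block matrix is, so `B P⁻¹ Bᴴ ≤ Q ↔ Bᴴ Q⁻¹ B ≤ P`.
With `P = εA + A₀` and `Q = (d/ε) M` the right-hand side reads `(ε/d) A₀ ≤ εA + A₀`, which follows
from `A₀ ≤ d A`. Hence `B (εA + A₀)⁻¹ Bᵀ ≤ (d/ε) M ≤ d/(ε c₀) D`, and the bounds on `S̃` are
this inequality scaled by `(αε/μ)²`.
-/

open Matrix

namespace Matrix

theorem posSemidef_sub_mul_inv_mul_conjTranspose_iff {m n 𝕜 : Type*} [Fintype m] [Fintype n]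
    [DecidableEq m] [DecidableEq n] [Field 𝕜] [PartialOrder 𝕜] [StarRing 𝕜] [StarOrderedRing 𝕜]
    {P : Matrix m m 𝕜} {Q : Matrix n n 𝕜} (hP : P.PosDef) (hQ : Q.PosDef) (B : Matrix n m 𝕜) :
    (Q - B * P⁻¹ * Bᴴ).PosSemidef ↔ (P - Bᴴ * Q⁻¹ * B).PosSemidef := by
  have := hP.isUnit.invertible
  have := hQ.isUnit.invertible
  simpa only [conjTranspose_conjTranspose] using
    (hP.fromBlocks₁₁ Bᴴ Q).symm.trans (hQ.fromBlocks₂₂ P Bᴴ)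

variable {n N : Type*} [Fintype n] [Fintype N]

theorem posSemidef_sub_of_dotProduct_mulVec_le {P Q : Matrix n n ℝ} (hP : P.IsHermitian)
    (hQ : Q.IsHermitian) (h : ∀ x, x ⬝ᵥ P *ᵥ x ≤ x ⬝ᵥ Q *ᵥ x) : (Q - P).PosSemidef :=
  .of_dotProduct_mulVec_nonneg (hQ.sub hP) fun x => by
    simpa [sub_mulVec] using h x

variable [DecidableEq N] {M : Matrix N N ℝ}

theorem posSemidef_transpose_mul_inv_mul (hM : M.PosDef) (B : Matrix N n ℝ) :
    (Bᵀ * M⁻¹ * B).PosSemidef := by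
  simpa using hM.inv.posSemidef.conjTranspose_mul_mul_same B

theorem posDef_smul_add_transpose_mul_inv_mul {A : Matrix n n ℝ} {ε : ℝ} (hA : A.PosDef)
    (hε : 0 < ε) (hM : M.PosDef) (B : Matrix N n ℝ) : (ε • A + Bᵀ * M⁻¹ * B).PosDef :=
  (hA.smul hε).add_posSemidef (posSemidef_transpose_mul_inv_mul hM B)

theorem posSemidef_div_smul_sub_mul_inv_mul_transpose [DecidableEq n] {A : Matrix n n ℝ}
    {B : Matrix N n ℝ} {ε d : ℝ} (hA : A.PosDef) (hM : M.PosDef) (hε : 0 < ε) (hd : 0 < d)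
    (hdA : (d • A - Bᵀ * M⁻¹ * B).PosSemidef) :
    ((d / ε) • M - B * (ε • A + Bᵀ * M⁻¹ * B)⁻¹ * Bᵀ).PosSemidef := by
  have hQ : ((d / ε) • M).PosDef := hM.smul (by positivity)
  suffices h : (ε • A + Bᵀ * M⁻¹ * B - Bᴴ * ((d / ε) • M)⁻¹ * B).PosSemidef by
    simpa only [conjTranspose_eq_transpose_of_trivial] using
      (posSemidef_sub_mul_inv_mul_conjTranspose_iff
        (posDef_smul_add_transpose_mul_inv_mul hA hε hM B) hQ B).mpr h
  have : Invertible (d / ε) := invertibleOfNonzero (by positivity)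
  have hsplit : ε • A + Bᵀ * M⁻¹ * B - Bᵀ * ((d / ε)⁻¹ • M⁻¹) * B
      = (ε / d) • (d • A - Bᵀ * M⁻¹ * B) + Bᵀ * M⁻¹ * B := by
    rw [Matrix.mul_smul, Matrix.smul_mul, inv_div]
    match_scalars <;> field_simp; ring
  rw [conjTranspose_eq_transpose_of_trivial, inv_smul M (d / ε) hM.det_pos.ne'.isUnit,
    invOf_eq_inv, hsplit]
  exact (hdA.smul (by positivity)).add (posSemidef_transpose_mul_inv_mul hM B)

end Matrix

theorem two_field_schur_bounds_general {n N : ℕ}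
    (A : Matrix (Fin n) (Fin n) ℝ) (M D : Matrix (Fin N) (Fin N) ℝ)
    (B : Matrix (Fin N) (Fin n) ℝ) (ε μ α c₀ d : ℝ)
    (hA : A.PosDef) (hM : M.PosDef)
    (hDM : (D - c₀ • M).PosSemidef)
    (hε : 0 < ε) (hc₀ : 0 < c₀) (hd : 0 < d)
    (hbound : ∀ u : Fin n → ℝ,
      u ⬝ᵥ (Bᵀ * M⁻¹ * B).mulVec u ≤ d * (u ⬝ᵥ A.mulVec u)) :
    (((ε / μ) • D + ((α * ε / μ) ^ 2) • (B * (ε • A + Bᵀ * M⁻¹ * B)⁻¹ * Bᵀ))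
        - (ε / μ) • D).PosSemidef ∧
    ((ε / μ * (1 + α ^ 2 * d / (c₀ * μ))) • D
        - ((ε / μ) • D + ((α * ε / μ) ^ 2) • (B * (ε • A + Bᵀ * M⁻¹ * B)⁻¹ * Bᵀ))).PosSemidef := by
  set X := B * (ε • A + Bᵀ * M⁻¹ * B)⁻¹ * Bᵀ
  have hX : X.PosSemidef := by
    simpa using (posDef_smul_add_transpose_mul_inv_mul hA hε hM B).inv.posSemidef
      |>.mul_mul_conjTranspose_same B
  have hdA : (d • A - Bᵀ * M⁻¹ * B).PosSemidef :=
    posSemidef_sub_of_dotProduct_mulVec_le (posSemidef_transpose_mul_inv_mul hM B).1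
      (hA.smul hd).1 (by simpa [smul_mulVec] using hbound)
  have hXM : ((d / ε) • M - X).PosSemidef :=
    posSemidef_div_smul_sub_mul_inv_mul_transpose hA hM hε hd hdA
  refine ⟨by simpa using hX.smul (sq_nonneg (α * ε / μ)), ?_⟩
  have hsplit : (ε / μ * (1 + α ^ 2 * d / (c₀ * μ))) • D - ((ε / μ) • D + (α * ε / μ) ^ 2 • X)
      = (α * ε / μ) ^ 2 • ((d / (ε * c₀)) • (D - c₀ • M) + ((d / ε) • M - X)) := by
    match_scalars <;> field_simp <;> ring
  rw [hsplit]
  exact ((hDM.smul (by positivity)).add hXM).smul (sq_nonneg _)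

theorem two_field_schur_bounds {n N : ℕ}
    (A : Matrix (Fin n) (Fin n) ℝ) (M D : Matrix (Fin N) (Fin N) ℝ)
    (B : Matrix (Fin N) (Fin n) ℝ) (ε μ α c₀ d : ℝ)
    (hA : A.PosDef) (hM : M.PosDef) (hD : D.PosDef)
    (hDM : (D - c₀ • M).PosSemidef)
    (hε : 0 < ε) (hμ : 0 < μ) (hα : 0 < α) (hc₀ : 0 < c₀) (hd : 0 < d)
    (hbound : ∀ u : Fin n → ℝ,
      u ⬝ᵥ (Bᵀ * M⁻¹ * B).mulVec u ≤ d * (u ⬝ᵥ A.mulVec u)) :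
    (((ε / μ) • D + ((α * ε / μ) ^ 2) • (B * (ε • A + Bᵀ * M⁻¹ * B)⁻¹ * Bᵀ))
        - (ε / μ) • D).PosSemidef ∧
    ((ε / μ * (1 + α ^ 2 * d / (c₀ * μ))) • D
        - ((ε / μ) • D + ((α * ε / μ) ^ 2) • (B * (ε • A + Bᵀ * M⁻¹ * B)⁻¹ * Bᵀ))).PosSemidef :=
  two_field_schur_bounds_general A M D B ε μ α c₀ d hA hM hDM hε hc₀ hd hbound
end

section
/- Let A be an SPD matrix, S̃ and Ŝ SPD matrices with Ŝ⁻¹S̃ having all eigenvalues in [1, c] for some c > 1, and consider the saddle point matrix 𝒜 = [[K, −Eᵀ],[−E, −F]] (with K SPD, Schur complement S̃ = F + E K⁻¹ Eᵀ) preconditioned by the block diagonal 𝒫 = diag(K, Ŝ). Then every eigenvalue λ of 𝒫⁻¹𝒜 satisfies λ ∈ [−√c, −1] ∪ [1, √c]. -/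
/-!
Multiplying the eigen-equation by `𝒫 = diag(K, Ŝ)` gives `K u - Eᵀ p = λ K u` and
`-E u - Ŝ p = λ Ŝ p`, i.e. `Eᵀ p = (1 - λ) K u` and `E u = -(1 + λ) Ŝ p`. Eliminating `u`,
`E K⁻¹ Eᵀ p = (λ² - 1) Ŝ p`, so `S̃ p = λ² Ŝ p`: when `p ≠ 0`, `λ²` is an eigenvalue of `Ŝ⁻¹ S̃`
and lies in `[1, c]`. When `p = 0`, `u ≠ 0` forces `λ = 1`.
-/

open Matrix

section
variable {ι κ R : Type*} [Fintype ι] [Fintype κ]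

theorem Matrix.nonsing_inv_mul_mulVec_eq_smul_iff [CommRing R] [DecidableEq ι]
    {P A : Matrix ι ι R} (hP : IsUnit P.det) (v : ι → R) (lam : R) :
    (P⁻¹ * A) *ᵥ v = lam • v ↔ A *ᵥ v = lam • P *ᵥ v := by
  constructor
  · intro h
    rw [← mulVec_smul, ← h, mulVec_mulVec, ← mul_assoc, mul_nonsing_inv _ hP, one_mul]
  · intro h
    rw [← mulVec_mulVec, h, mulVec_smul, mulVec_mulVec, nonsing_inv_mul _ hP, one_mulVec]

theorem Matrix.eq_one_of_mulVec_eq_smul_mulVec [Field R] [DecidableEq ι] {K : Matrix ι ι R}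
    (hK : IsUnit K.det) {u : ι → R} (hu : u ≠ 0) {lam : R} (h : K *ᵥ u = lam • K *ᵥ u) :
    lam = 1 := by
  have hKu : K *ᵥ u ≠ 0 := fun h0 => hu <| by
    rw [← one_mulVec u, ← nonsing_inv_mul _ hK, ← mulVec_mulVec, h0, mulVec_zero]
  have h0 : (1 - lam) • K *ᵥ u = 0 := by rw [sub_smul, one_smul, ← h, sub_self]
  exact (sub_eq_zero.mp ((smul_eq_zero.mp h0).resolve_right hKu)).symm

theorem Matrix.fromBlocks_mulVec_sumElim_eq_smul_fromBlocks_diag_iff [CommRing R]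
    (A : Matrix ι ι R) (B : Matrix ι κ R) (C : Matrix κ ι R) (D : Matrix κ κ R)
    (K : Matrix ι ι R) (S : Matrix κ κ R) (u : ι → R) (p : κ → R) (lam : R) :
    fromBlocks A B C D *ᵥ Sum.elim u p = lam • fromBlocks K 0 0 S *ᵥ Sum.elim u p ↔
      A *ᵥ u + B *ᵥ p = lam • K *ᵥ u ∧ C *ᵥ u + D *ᵥ p = lam • S *ᵥ p := by
  simp only [fromBlocks_mulVec, funext_iff, Sum.forall, Pi.smul_apply, Sum.elim_inl,
    Sum.elim_inr, Sum.elim_comp_inl, Sum.elim_comp_inr, zero_mulVec, add_zero, zero_add]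

theorem Matrix.saddlePoint_schur_mulVec_eq_sq_smul [CommRing R] [DecidableEq ι]
    {K : Matrix ι ι R} (hK : IsUnit K.det) {E : Matrix κ ι R} {S : Matrix κ κ R}
    {u : ι → R} {p : κ → R} {lam : R}
    (h₁ : K *ᵥ u + (-Eᵀ) *ᵥ p = lam • K *ᵥ u) (h₂ : (-E) *ᵥ u + (-S) *ᵥ p = lam • S *ᵥ p) :
    (S + E * K⁻¹ * Eᵀ) *ᵥ p = lam ^ 2 • S *ᵥ p := by
  have hEt : Eᵀ *ᵥ p = K *ᵥ ((1 - lam) • u) := by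
    rw [neg_mulVec] at h₁
    rw [mulVec_smul]
    linear_combination (norm := module) -h₁
  have hE : E *ᵥ u = (-(1 + lam)) • S *ᵥ p := by
    rw [neg_mulVec, neg_mulVec] at h₂
    linear_combination (norm := module) -h₂
  have := invertibleOfIsUnitDet K hK
  rw [add_mulVec, ← mulVec_mulVec, ← mulVec_mulVec, inv_mulVec_eq_vec hEt, mulVec_smul, hE]
  module

end

theorem Real.mem_Icc_neg_sqrt_or_mem_Icc_sqrt_of_sq_mem_Icc {lam c : ℝ}
    (h : lam ^ 2 ∈ Set.Icc 1 c) :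
    (-Real.sqrt c ≤ lam ∧ lam ≤ -1) ∨ (1 ≤ lam ∧ lam ≤ Real.sqrt c) := by
  have habs : |lam| ≤ Real.sqrt c := Real.abs_le_sqrt h.2
  rcases le_or_gt 0 lam with hs | hs
  · right
    exact ⟨by nlinarith [h.1], by rwa [abs_of_nonneg hs] at habs⟩
  · left
    exact ⟨by linarith [neg_abs_le lam], by nlinarith [h.1]⟩

theorem saddle_point_diag_precond_eigenvalues_general {n m : ℕ}
    (K : Matrix (Fin n) (Fin n) ℝ) (E : Matrix (Fin m) (Fin n) ℝ)
    (F Shat : Matrix (Fin m) (Fin m) ℝ) (c : ℝ)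
    (hK : K.PosDef) (hShat : Shat.PosDef)
    (hc : 1 < c)
    (hFShat : F = Shat)
    (heig : ∀ (lam : ℝ) (v : Fin m → ℝ), v ≠ 0 →
      (Shat⁻¹ * (F + E * K⁻¹ * Eᵀ)).mulVec v = lam • v → 1 ≤ lam ∧ lam ≤ c) :
    ∀ (lam : ℝ) (v : Fin n ⊕ Fin m → ℝ), v ≠ 0 →
      ((fromBlocks K 0 0 Shat)⁻¹ * fromBlocks K (-Eᵀ) (-E) (-F)).mulVec v = lam • v →
      (-Real.sqrt c ≤ lam ∧ lam ≤ -1) ∨ (1 ≤ lam ∧ lam ≤ Real.sqrt c) := by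
  subst hFShat
  intro lam v hv h
  have hKdet : IsUnit K.det := isUnit_iff_ne_zero.mpr hK.det_pos.ne'
  have hFdet : IsUnit F.det := isUnit_iff_ne_zero.mpr hShat.det_pos.ne'
  have hPdet : IsUnit (fromBlocks K (0 : Matrix (Fin n) (Fin m) ℝ) 0 F).det := by
    rw [det_fromBlocks_zero₂₁]
    exact hKdet.mul hFdet
  obtain ⟨u, p, rfl⟩ : ∃ u p, v = Sum.elim u p := ⟨_, _, (Sum.elim_comp_inl_inr v).symm⟩
  rw [nonsing_inv_mul_mulVec_eq_smul_iff hPdet,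
    fromBlocks_mulVec_sumElim_eq_smul_fromBlocks_diag_iff] at h
  obtain ⟨h₁, h₂⟩ := h
  refine Real.mem_Icc_neg_sqrt_or_mem_Icc_sqrt_of_sq_mem_Icc ?_
  by_cases hp : p = 0
  · have hu : u ≠ 0 := fun hu => hv (by rw [hu, hp, Sum.elim_zero_zero])
    rw [hp, mulVec_zero, add_zero] at h₁
    rw [eq_one_of_mulVec_eq_smul_mulVec hKdet hu h₁]
    constructor <;> linarith
  · exact heig _ p hp <| (nonsing_inv_mul_mulVec_eq_smul_iff hFdet p _).mpr
      (saddlePoint_schur_mulVec_eq_sq_smul hKdet h₁ h₂)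

theorem saddle_point_diag_precond_eigenvalues {n m : ℕ}
    (K : Matrix (Fin n) (Fin n) ℝ) (E : Matrix (Fin m) (Fin n) ℝ)
    (F Shat : Matrix (Fin m) (Fin m) ℝ) (c : ℝ)
    (hK : K.PosDef) (hF : F.PosSemidef) (hShat : Shat.PosDef)
    (hStilde : (F + E * K⁻¹ * Eᵀ).PosDef)
    (hc : 1 < c)
    (hFShat : F = Shat)
    (heig : ∀ (lam : ℝ) (v : Fin m → ℝ), v ≠ 0 →
      (Shat⁻¹ * (F + E * K⁻¹ * Eᵀ)).mulVec v = lam • v → 1 ≤ lam ∧ lam ≤ c) :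
    ∀ (lam : ℝ) (v : Fin n ⊕ Fin m → ℝ), v ≠ 0 →
      ((fromBlocks K 0 0 Shat)⁻¹ * fromBlocks K (-Eᵀ) (-E) (-F)).mulVec v = lam • v →
      (-Real.sqrt c ≤ lam ∧ lam ≤ -1) ∨ (1 ≤ lam ∧ lam ≤ Real.sqrt c) :=
  saddle_point_diag_precond_eigenvalues_general K E F Shat c hK hShat hc hFShat heig
end

section
/- Let X be a diagonalizable real matrix whose eigenvalues all lie in an interval [c, e] with 0 < c ≤ e. Then for every k ≥ 1, min over polynomials p of degree ≤ k−1 with p(0)=1 of ‖p(X)‖ (operator norm) is at most κ(V) · 2 ((√e − √c)/(√e + √c))^{k−1}, where V diagonalizes X and κ(V) is its condition number; in particular if X is symmetric the bound is 2((√e−√c)/(√e+√c))^{k−1}. -/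
/-!
With `s = (e + c) / (e - c)`, the rescaled Chebyshev polynomial
`p(x) = T_n((e + c - 2x) / (e - c)) / T_n(s)` has `p(0) = 1` and `|p| ≤ 1 / T_n(s)` on `[c, e]`,
because the affine change of variables maps `[c, e]` onto `[-1, 1]`. Writing `s = cosh (log t)`
with `t = (√e + √c) / (√e - √c)` gives `T_n(s) = (tⁿ + t⁻ⁿ) / 2 ≥ tⁿ / 2`.
For `X = V D V⁻¹` we have `p(X) = V p(D) V⁻¹` and `‖p(D)‖ = maxᵢ |p(λᵢ)|`, which produces the
factor `‖V‖ ‖V⁻¹‖`; for symmetric `X` the spectral theorem lets `V` be orthogonal, and then the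
factor disappears.
-/

open Matrix Polynomial

namespace Polynomial.Chebyshev

theorem eval_T_real_half_add_inv {t : ℝ} (ht : 0 < t) (n : ℕ) :
    (T ℝ n).eval ((t + t⁻¹) / 2) = (t ^ n + (t ^ n)⁻¹) / 2 := by
  have := T_real_cosh (Real.log t) n
  rw [Real.cosh_eq, Real.cosh_eq, Int.cast_natCast, ← Real.log_pow] at this
  rwa [Real.exp_neg, Real.exp_neg, Real.exp_log ht, Real.exp_log (pow_pos ht _)] at this

variable {c e : ℝ}

theorem one_le_eval_T_real_add_div_sub (hc : 0 ≤ c) (hce : c < e) (n : ℕ) :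
    1 ≤ (T ℝ n).eval ((e + c) / (e - c)) :=
  one_le_eval_T_real n ((one_le_div (by linarith)).2 (by linarith))

theorem le_eval_T_real_add_div_sub (hc : 0 < c) (hce : c < e) (n : ℕ) :
    ((√e + √c) / (√e - √c)) ^ n / 2 ≤ (T ℝ n).eval ((e + c) / (e - c)) := by
  have hsc : 0 < √c := Real.sqrt_pos.2 hc
  have hse : √c < √e := Real.sqrt_lt_sqrt hc.le hce
  have ht : 0 < (√e + √c) / (√e - √c) := div_pos (by linarith) (by linarith)
  have hs : ((√e + √c) / (√e - √c) + ((√e + √c) / (√e - √c))⁻¹) / 2 = (e + c) / (e - c) := by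
    have : √e - √c ≠ 0 := by linarith
    have : e - c ≠ 0 := by linarith
    rw [inv_div]
    field_simp
    nlinarith [Real.sq_sqrt hc.le, Real.sq_sqrt (hc.le.trans hce.le)]
  rw [← hs, eval_T_real_half_add_inv ht]
  linarith [inv_pos.2 (pow_pos ht n)]

end Polynomial.Chebyshev

open Polynomial.Chebyshev (T abs_eval_T_real_le_one natDegree_T one_le_eval_T_real_add_div_sub
  le_eval_T_real_add_div_sub)

noncomputable def shiftedChebyshevT (c e : ℝ) (n : ℕ) : ℝ[X] :=
  C ((T ℝ n).eval ((e + c) / (e - c)))⁻¹ *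
    (T ℝ n).comp (C ((e + c) / (e - c)) - C (2 / (e - c)) * X)

variable {c e : ℝ}

theorem natDegree_shiftedChebyshevT_le (n : ℕ) : (shiftedChebyshevT c e n).natDegree ≤ n := by
  refine (natDegree_C_mul_le _ _).trans (natDegree_comp_le.trans ?_)
  have : (C ((e + c) / (e - c)) - C (2 / (e - c)) * X).natDegree ≤ 1 := by compute_degree
  simpa [natDegree_T] using Nat.mul_le_mul_left _ this

theorem shiftedChebyshevT_eval_zero (hc : 0 ≤ c) (hce : c < e) (n : ℕ) :
    (shiftedChebyshevT c e n).eval 0 = 1 := by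
  have := one_le_eval_T_real_add_div_sub hc hce n
  simp only [shiftedChebyshevT, eval_mul, eval_C, eval_comp, eval_sub, eval_X, mul_zero, sub_zero]
  exact inv_mul_cancel₀ (by linarith)

theorem abs_eval_shiftedChebyshevT_le (hc : 0 ≤ c) (hce : c < e) (n : ℕ) {γ : ℝ}
    (hγ : γ ∈ Set.Icc c e) :
    |(shiftedChebyshevT c e n).eval γ| ≤ ((T ℝ n).eval ((e + c) / (e - c)))⁻¹ := by
  have hT := one_le_eval_T_real_add_div_sub hc hce n
  have hy : |(e + c) / (e - c) - 2 / (e - c) * γ| ≤ 1 := by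
    rw [← mul_div_right_comm, div_sub_div_same, abs_div, abs_of_pos (sub_pos.2 hce),
      div_le_one (sub_pos.2 hce), abs_le]
    constructor <;> linarith [hγ.1, hγ.2]
  simp only [shiftedChebyshevT, eval_mul, eval_C, eval_comp, eval_sub, eval_X, abs_mul,
    abs_inv, abs_of_pos (zero_lt_one.trans_le hT)]
  exact mul_le_of_le_one_right (by positivity) (abs_eval_T_real_le_one _ hy)

theorem exists_natDegree_le_eval_zero_eq_one_abs_le (hc : 0 < c) (hce : c ≤ e) (n : ℕ) :
    ∃ p : ℝ[X], p.natDegree ≤ n ∧ p.eval 0 = 1 ∧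
      ∀ γ ∈ Set.Icc c e, |p.eval γ| ≤ 2 * ((√e - √c) / (√e + √c)) ^ n := by
  obtain rfl | hlt := hce.eq_or_lt
  · refine ⟨(1 - C c⁻¹ * X : ℝ[X]) ^ n, ?_, by simp, fun γ hγ => ?_⟩
    · compute_degree
    · obtain rfl : γ = c := le_antisymm hγ.2 hγ.1
      simpa [inv_mul_cancel₀ hc.ne'] using le_mul_of_one_le_left (pow_nonneg le_rfl n) one_le_two
  · refine ⟨shiftedChebyshevT c e n, natDegree_shiftedChebyshevT_le n,
      shiftedChebyshevT_eval_zero hc.le hlt n, fun γ hγ => ?_⟩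
    have hsc : 0 < √c := Real.sqrt_pos.2 hc
    have hse : √c < √e := Real.sqrt_lt_sqrt hc.le hlt
    calc |(shiftedChebyshevT c e n).eval γ| ≤ ((T ℝ n).eval ((e + c) / (e - c)))⁻¹ :=
          abs_eval_shiftedChebyshevT_le hc.le hlt n hγ
      _ ≤ (((√e + √c) / (√e - √c)) ^ n / 2)⁻¹ :=
          inv_anti₀ (by positivity) (le_eval_T_real_add_div_sub hc hlt n)
      _ = 2 * ((√e - √c) / (√e + √c)) ^ n := by rw [inv_div, div_eq_mul_inv, ← inv_pow, inv_div]

theorem Polynomial.aeval_units_conj {R A : Type*} [CommSemiring R] [Semiring A] [Algebra R A]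
    (u : Aˣ) (a : A) (p : R[X]) :
    aeval (↑u * a * ↑u⁻¹) p = ↑u * aeval a p * ↑u⁻¹ :=
  aeval_algHom_apply (MulSemiringAction.toAlgEquiv R A (ConjAct.toConjAct u)) a p

namespace Matrix

variable {n R 𝕜 : Type*} [Fintype n] [DecidableEq n]

theorem aeval_diagonal [CommSemiring R] (g : n → R) (p : R[X]) :
    aeval (diagonal g) p = diagonal fun i => p.eval (g i) := by
  rw [← diagonalAlgHom_apply (R := R), aeval_algHom_apply]
  refine congrArg diagonal (funext fun i => ?_)
  simp

theorem spectrum_units_conj_diagonal [Field R] (u : (Matrix n n R)ˣ) (g : n → R) :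
    spectrum R ((u : Matrix n n R) * diagonal g * (↑u⁻¹ : Matrix n n R)) = Set.range g := by
  rw [spectrum.units_conjugate, spectrum_diagonal]

open scoped Matrix.Norms.L2Operator

variable [RCLike 𝕜] {M : ℝ}

theorem l2_opNorm_aeval_diagonal_le (hM : 0 ≤ M) {g : n → 𝕜} {p : 𝕜[X]}
    (hp : ∀ i, ‖p.eval (g i)‖ ≤ M) : ‖aeval (diagonal g) p‖ ≤ M := by
  rw [aeval_diagonal, l2_opNorm_diagonal]
  exact (pi_norm_le_iff_of_nonneg hM).2 hp

theorem l2_opNorm_aeval_units_conj_diagonal_le (hM : 0 ≤ M) (u : (Matrix n n 𝕜)ˣ) {g : n → 𝕜}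
    {p : 𝕜[X]} (hp : ∀ i, ‖p.eval (g i)‖ ≤ M) :
    ‖aeval ((u : Matrix n n 𝕜) * diagonal g * (↑u⁻¹ : Matrix n n 𝕜)) p‖ ≤
      ‖(u : Matrix n n 𝕜)‖ * ‖(↑u⁻¹ : Matrix n n 𝕜)‖ * M := by
  rw [aeval_units_conj]
  calc ‖(u : Matrix n n 𝕜) * aeval (diagonal g) p * (↑u⁻¹ : Matrix n n 𝕜)‖
      ≤ ‖(u : Matrix n n 𝕜)‖ * ‖aeval (diagonal g) p‖ * ‖(↑u⁻¹ : Matrix n n 𝕜)‖ :=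
        norm_mul₃_le
    _ ≤ ‖(u : Matrix n n 𝕜)‖ * M * ‖(↑u⁻¹ : Matrix n n 𝕜)‖ := by
        gcongr; exact l2_opNorm_aeval_diagonal_le hM hp
    _ = _ := mul_right_comm _ _ _

theorem l2_opNorm_aeval_unitary_conj_diagonal_le (hM : 0 ≤ M) (U : unitary (Matrix n n 𝕜))
    {g : n → 𝕜} {p : 𝕜[X]} (hp : ∀ i, ‖p.eval (g i)‖ ≤ M) :
    ‖aeval (Unitary.conjStarAlgAut 𝕜 _ U (diagonal g)) p‖ ≤ M := by
  rw [aeval_algHom_apply, Unitary.conjStarAlgAut_apply,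
    CStarRing.norm_mul_mem_unitary _ (Unitary.star_mem U.2), CStarRing.norm_coe_unitary_mul]
  exact l2_opNorm_aeval_diagonal_le hM hp

end Matrix

theorem chebyshev_polynomial_minimization_general {N : ℕ} [DecidableEq (Fin N)]
    (X V : Matrix (Fin N) (Fin N) ℝ) (f : Fin N → ℝ) (c e : ℝ) (k : ℕ)
    (hc : 0 < c) (hce : c ≤ e)
    (hV : IsUnit V.det) (hX : X = V * diagonal f * V⁻¹)
    (hf : ∀ i, c ≤ f i ∧ f i ≤ e) :
    (∃ p : Polynomial ℝ, p.natDegree ≤ k - 1 ∧ p.eval 0 = 1 ∧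
      ‖toEuclideanCLM (𝕜 := ℝ) (aeval X p)‖ ≤
        (‖toEuclideanCLM (𝕜 := ℝ) V‖ * ‖toEuclideanCLM (𝕜 := ℝ) V⁻¹‖) *
          (2 * ((Real.sqrt e - Real.sqrt c) / (Real.sqrt e + Real.sqrt c)) ^ (k - 1))) ∧
    (X.IsSymm → ∃ p : Polynomial ℝ, p.natDegree ≤ k - 1 ∧ p.eval 0 = 1 ∧
      ‖toEuclideanCLM (𝕜 := ℝ) (aeval X p)‖ ≤
        2 * ((Real.sqrt e - Real.sqrt c) / (Real.sqrt e + Real.sqrt c)) ^ (k - 1)) := by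
  obtain ⟨p, hdeg, hp0, hp⟩ := exists_natDegree_le_eval_zero_eq_one_abs_le hc hce (k - 1)
  have hM : 0 ≤ 2 * ((√e - √c) / (√e + √c)) ^ (k - 1) :=
    mul_nonneg zero_le_two
      (pow_nonneg (div_nonneg (sub_nonneg.2 (Real.sqrt_le_sqrt hce)) (by positivity)) _)
  set u := nonsingInvUnit V hV
  have hXu : X = (u : Matrix _ _ ℝ) * diagonal f * (↑u⁻¹ : Matrix _ _ ℝ) := hX
  refine ⟨⟨p, hdeg, hp0, ?_⟩, fun hsymm => ⟨p, hdeg, hp0, ?_⟩⟩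
  · rw [hXu]
    exact l2_opNorm_aeval_units_conj_diagonal_le hM u fun i => hp _ (hf i)
  · have hXh : X.IsHermitian := isHermitian_iff_isSymm.2 hsymm
    have hev : ∀ i, hXh.eigenvalues i ∈ Set.Icc c e := by
      intro i
      obtain ⟨j, hj⟩ : hXh.eigenvalues i ∈ Set.range f := by
        rw [← spectrum_units_conj_diagonal u f, ← hXu]
        exact hXh.eigenvalues_mem_spectrum_real i
      exact hj ▸ hf j
    rw [hXh.spectral_theorem]
    exact l2_opNorm_aeval_unitary_conj_diagonal_le hM _ fun i => hp _ (hev i)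

theorem chebyshev_polynomial_minimization {N : ℕ} [DecidableEq (Fin N)]
    (X V : Matrix (Fin N) (Fin N) ℝ) (f : Fin N → ℝ) (c e : ℝ) (k : ℕ)
    (hc : 0 < c) (hce : c ≤ e) (hk : 1 ≤ k)
    (hV : IsUnit V.det) (hX : X = V * diagonal f * V⁻¹)
    (hf : ∀ i, c ≤ f i ∧ f i ≤ e) :
    (∃ p : Polynomial ℝ, p.natDegree ≤ k - 1 ∧ p.eval 0 = 1 ∧
      ‖toEuclideanCLM (𝕜 := ℝ) (aeval X p)‖ ≤
        (‖toEuclideanCLM (𝕜 := ℝ) V‖ * ‖toEuclideanCLM (𝕜 := ℝ) V⁻¹‖) *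
          (2 * ((Real.sqrt e - Real.sqrt c) / (Real.sqrt e + Real.sqrt c)) ^ (k - 1))) ∧
    (X.IsSymm → ∃ p : Polynomial ℝ, p.natDegree ≤ k - 1 ∧ p.eval 0 = 1 ∧
      ‖toEuclideanCLM (𝕜 := ℝ) (aeval X p)‖ ≤
        2 * ((Real.sqrt e - Real.sqrt c) / (Real.sqrt e + Real.sqrt c)) ^ (k - 1)) :=
  chebyshev_polynomial_minimization_general X V f c e k hc hce hV hX hf
end

section
/- Let S₃ be the 2×2 block symmetric matrix [[T + R, R],[R, R + C]] where T is SPD, R is symmetric positive semi-definite, and C is symmetric positive semi-definite with R + C SPD. Let Ŝ₃ = diag(T + R, G) with G SPD. If λ ≠ 1 is an eigenvalue of Ŝ₃⁻¹S₃ with eigenvector (p, q), then q ≠ 0 and λ satisfies λ² − (1+b)λ + (b−a) = 0, where a = qᵀ R (T+R)⁻¹ R q / (qᵀGq) and b = qᵀ(R+C)q / (qᵀGq). -/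
/-! `T + R` is positive definite, hence invertible, and the first block row gives
`(T + R)⁻¹ R q = (λ - 1) p`; so `q = 0` would force `p = 0`, and `qᵀ G q > 0`. Pairing the second
block row with `q` and using `qᵀ R (T + R)⁻¹ R q = (λ - 1) qᵀ R p` to eliminate `qᵀ R p` leaves
the scalar quadratic for `λ`. -/

open Matrix

namespace Matrix

variable {K n : Type*} [Field K] [Fintype n]

theorem mulVec_eq_sub_one_smul_of_add_mulVec_eq_smul {A R : Matrix n n K} {p q : n → K} {lam : K}
    (h : A *ᵥ p + R *ᵥ q = lam • A *ᵥ p) : R *ᵥ q = (lam - 1) • A *ᵥ p := by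
  rw [sub_smul, one_smul, ← h]
  abel

variable [DecidableEq n]

theorem inv_mulVec_mulVec_eq_sub_one_smul {A R : Matrix n n K} {p q : n → K} {lam : K}
    (hA : IsUnit A.det) (h : A *ᵥ p + R *ᵥ q = lam • A *ᵥ p) :
    A⁻¹ *ᵥ (R *ᵥ q) = (lam - 1) • p := by
  rw [mulVec_eq_sub_one_smul_of_add_mulVec_eq_smul h, mulVec_smul, mulVec_mulVec,
    nonsing_inv_mul _ hA, one_mulVec]

theorem eq_zero_of_add_mulVec_eq_smul_of_ne_one {A R : Matrix n n K} {p : n → K} {lam : K}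
    (hA : IsUnit A.det) (hlam : lam ≠ 1) (h : A *ᵥ p + R *ᵥ 0 = lam • A *ᵥ p) : p = 0 := by
  have hp := inv_mulVec_mulVec_eq_sub_one_smul hA h
  rw [mulVec_zero, mulVec_zero, eq_comm, smul_eq_zero] at hp
  exact hp.resolve_left (sub_ne_zero.mpr hlam)

theorem dotProduct_mulVec_mul_inv_mul_eq {A R : Matrix n n K} {p q : n → K} {lam : K}
    (hA : IsUnit A.det) (h : A *ᵥ p + R *ᵥ q = lam • A *ᵥ p) :
    q ⬝ᵥ (R * A⁻¹ * R) *ᵥ q = (lam - 1) * (q ⬝ᵥ R *ᵥ p) := by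
  rw [← mulVec_mulVec, ← mulVec_mulVec, inv_mulVec_mulVec_eq_sub_one_smul hA h, mulVec_smul,
    dotProduct_smul, smul_eq_mul]

theorem block_eigenvalue_quadratic {A R S G : Matrix n n K} {p q : n → K} {lam : K}
    (hA : IsUnit A.det) (hG : q ⬝ᵥ G *ᵥ q ≠ 0)
    (h₁ : A *ᵥ p + R *ᵥ q = lam • A *ᵥ p) (h₂ : R *ᵥ p + S *ᵥ q = lam • G *ᵥ q) :
    lam ^ 2 - (1 + (q ⬝ᵥ S *ᵥ q) / (q ⬝ᵥ G *ᵥ q)) * lam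
      + ((q ⬝ᵥ S *ᵥ q) / (q ⬝ᵥ G *ᵥ q) - (q ⬝ᵥ (R * A⁻¹ * R) *ᵥ q) / (q ⬝ᵥ G *ᵥ q)) = 0 := by
  have ha := dotProduct_mulVec_mul_inv_mul_eq hA h₁
  have hb : q ⬝ᵥ R *ᵥ p + q ⬝ᵥ S *ᵥ q = lam * (q ⬝ᵥ G *ᵥ q) := by
    rw [← dotProduct_add, h₂, dotProduct_smul, smul_eq_mul]
  field_simp
  linear_combination (1 - lam) * hb - ha

end Matrix

theorem three_field_eigenvalue_quadratic_general {N : ℕ}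
    (T G R C : Matrix (Fin N) (Fin N) ℝ) (lam : ℝ)
    (p q : Fin N → ℝ)
    (hT : T.PosDef) (hG : G.PosDef) (hR : R.PosSemidef)
    (hlam : lam ≠ 1)
    (hvec : ¬(p = 0 ∧ q = 0))
    (heq1 : (T + R).mulVec p + R.mulVec q = lam • (T + R).mulVec p)
    (heq2 : R.mulVec p + (R + C).mulVec q = lam • G.mulVec q) :
    q ≠ 0 ∧
    lam ^ 2
      - (1 + (q ⬝ᵥ (R + C).mulVec q) / (q ⬝ᵥ G.mulVec q)) * lam
      + ((q ⬝ᵥ (R + C).mulVec q) / (q ⬝ᵥ G.mulVec q)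
          - (q ⬝ᵥ (R * (T + R)⁻¹ * R).mulVec q) / (q ⬝ᵥ G.mulVec q)) = 0 := by
  have hTR : IsUnit (T + R).det := (hT.add_posSemidef hR).det_pos.ne'.isUnit
  have hq : q ≠ 0 := by
    rintro rfl
    exact hvec ⟨eq_zero_of_add_mulVec_eq_smul_of_ne_one hTR hlam heq1, rfl⟩
  exact ⟨hq, block_eigenvalue_quadratic hTR (hG.dotProduct_mulVec_pos hq).ne' heq1 heq2⟩

theorem three_field_eigenvalue_quadratic {N : ℕ}
    (T G R C : Matrix (Fin N) (Fin N) ℝ) (lam : ℝ)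
    (p q : Fin N → ℝ)
    (hT : T.PosDef) (hG : G.PosDef) (hR : R.PosSemidef) (hC : C.PosSemidef)
    (hRC : (R + C).PosDef)
    (hlam : lam ≠ 1)
    (hvec : ¬(p = 0 ∧ q = 0))
    (heq1 : (T + R).mulVec p + R.mulVec q = lam • (T + R).mulVec p)
    (heq2 : R.mulVec p + (R + C).mulVec q = lam • G.mulVec q) :
    q ≠ 0 ∧
    lam ^ 2
      - (1 + (q ⬝ᵥ (R + C).mulVec q) / (q ⬝ᵥ G.mulVec q)) * lam
      + ((q ⬝ᵥ (R + C).mulVec q) / (q ⬝ᵥ G.mulVec q)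
          - (q ⬝ᵥ (R * (T + R)⁻¹ * R).mulVec q) / (q ⬝ᵥ G.mulVec q)) = 0 :=
  three_field_eigenvalue_quadratic_general T G R C lam p q hT hG hR hlam hvec heq1 heq2
end
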